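/- Let U_1, ..., U_{n+1} be exchangeable real-valued random variables and β ∈ (0,1). Then P(U_{n+1} ≤ U_{(⌈β(n+1)⌉)}) ≥ β, where U_{(k)} denotes the k-th smallest order statistic of (U_1, ..., U_{n+1}). -/

import Mathlib

/-!
Let `k = ⌈β(n+1)⌉`. For every outcome at least `k` of the coordinates are `≤ U_(k)`, so the
events `Aᵢ = {Uᵢ ≤ U_(k)}` satisfy `∑ᵢ P(Aᵢ) ≥ k`. The order statistic is symmetric, so by
exchangeability all `P(Aᵢ)` are equal, whence `(n+1) P(A_{n+1}) ≥ k ≥ β(n+1)`.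
-/

open MeasureTheory

/-- The `k`-th smallest value (1-indexed) of a finite family of reals. -/
noncomputable def orderStat {m : ℕ} (U : Fin m → ℝ) (k : ℕ) : ℝ :=
  (List.insertionSort (· ≤ ·) (List.ofFn U)).getD (k - 1) 0

open Finset ENNReal

theorem Finset.card_filter_comp_perm {ι : Type*} [Fintype ι] (p : ι → Prop) [DecidablePred p]
    (σ : Equiv.Perm ι) : #{j | p (σ j)} = #{j | p j} := by
  simp only [card_filter]
  exact Equiv.sum_comp σ fun j => if p j then 1 else 0

namespace Monotone

variable {α : Type*} [LinearOrder α] {m : ℕ} {v : Fin m → α}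

theorem le_apply_iff_card_filter_lt_le (hv : Monotone v) (i : Fin m) (t : α) :
    t ≤ v i ↔ #{j | v j < t} ≤ i := by
  constructor
  · intro hti
    calc #{j | v j < t} ≤ #(Iio i) := card_le_card fun j hj => by
          simp only [mem_filter, mem_univ, true_and] at hj
          simp only [mem_Iio]
          by_contra! hij
          exact (hti.trans (hv hij)).not_gt hj
      _ = i := Fin.card_Iio i
  · intro hcard
    by_contra! hvi
    have : #(Iic i) ≤ #{j | v j < t} := card_le_card fun j hj =>
      mem_filter.2 ⟨mem_univ j, (hv (mem_Iic.1 hj)).trans_lt hvi⟩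
    rw [Fin.card_Iic] at this
    omega

theorem le_card_filter_le_apply (hv : Monotone v) (i : Fin m) : i + 1 ≤ #{j | v j ≤ v i} := by
  rw [← Fin.card_Iic]
  exact card_le_card fun j hj => mem_filter.2 ⟨mem_univ j, hv (mem_Iic.1 hj)⟩

end Monotone

section OrderStat

variable {m : ℕ}

theorem insertionSort_ofFn_eq_ofFn_comp_sort (u : Fin m → ℝ) :
    List.insertionSort (· ≤ ·) (List.ofFn u) = List.ofFn (u ∘ Tuple.sort u) :=
  List.Perm.eq_of_pairwise' (List.pairwise_insertionSort _ _)
    (List.pairwise_ofFn.2 fun _ _ hij => Tuple.monotone_sort u hij.le)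
    ((List.perm_insertionSort _ _).trans ((Tuple.sort u).ofFn_comp_perm u).symm)

theorem orderStat_succ (u : Fin m → ℝ) (i : Fin m) :
    orderStat u (i + 1) = u (Tuple.sort u i) := by
  simp [orderStat, insertionSort_ofFn_eq_ofFn_comp_sort]

theorem orderStat_comp_perm (u : Fin m → ℝ) (σ : Equiv.Perm (Fin m)) (k : ℕ) :
    orderStat (u ∘ σ) k = orderStat u k := by
  unfold orderStat
  congr 1
  exact List.Perm.eq_of_pairwise' (List.pairwise_insertionSort _ _)
    (List.pairwise_insertionSort _ _)
    ((List.perm_insertionSort _ _).trans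
      ((σ.ofFn_comp_perm u).trans (List.perm_insertionSort _ _).symm))

theorem le_orderStat_succ_iff (u : Fin m → ℝ) (i : Fin m) (t : ℝ) :
    t ≤ orderStat u (i + 1) ↔ #{j | u j < t} ≤ i := by
  rw [orderStat_succ, ← card_filter_comp_perm (fun j => u j < t) (Tuple.sort u)]
  exact (Tuple.monotone_sort u).le_apply_iff_card_filter_lt_le i t

theorem le_card_filter_le_orderStat (u : Fin m → ℝ) (i : Fin m) :
    i + 1 ≤ #{j | u j ≤ orderStat u (i + 1)} := by
  rw [orderStat_succ, ← card_filter_comp_perm (fun j => u j ≤ _) (Tuple.sort u)]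
  exact (Tuple.monotone_sort u).le_card_filter_le_apply i

theorem measurableSet_apply_le_orderStat (i l : Fin m) :
    MeasurableSet {u : Fin m → ℝ | u l ≤ orderStat u (i + 1)} := by
  simp_rw [le_orderStat_succ_iff, card_filter]
  refine measurableSet_le (Finset.measurable_sum _ fun j _ => ?_) measurable_const
  exact Measurable.ite (measurableSet_lt (measurable_pi_apply j) (measurable_pi_apply l))
    measurable_const measurable_const

end OrderStat

section Exchangeable

variable {Ω ι α : Type*} [MeasurableSpace Ω] [MeasurableSpace α]

def Exchangeable (P : Measure Ω) (U : Ω → ι → α) : Prop :=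
  ∀ σ : Equiv.Perm ι, Measure.map (fun ω => U ω ∘ σ) P = Measure.map U P

theorem Exchangeable.measure_preimage_comp_perm {P : Measure Ω} {U : Ω → ι → α}
    (hexch : Exchangeable P U) (hU : Measurable U) (σ : Equiv.Perm ι) {S : Set (ι → α)}
    (hS : MeasurableSet S) :
    P ((fun ω => U ω ∘ σ) ⁻¹' S) = P (U ⁻¹' S) := by
  have hUσ : Measurable fun ω => U ω ∘ σ :=
    (measurable_pi_lambda _ fun j => measurable_pi_apply (σ j)).comp hU
  rw [← Measure.map_apply hUσ hS, hexch σ, Measure.map_apply hU hS]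

end Exchangeable

open scoped Classical in
theorem MeasureTheory.Measure.mul_measure_univ_le_sum {Ω ι : Type*} [MeasurableSpace Ω]
    [Fintype ι] (μ : Measure Ω) {A : ι → Set Ω} (hA : ∀ i, MeasurableSet (A i)) {k : ℕ}
    (hk : ∀ ω, k ≤ #{i | ω ∈ A i}) :
    k * μ Set.univ ≤ ∑ i, μ (A i) := by
  calc (k : ℝ≥0∞) * μ Set.univ = ∫⁻ _, (k : ℝ≥0∞) ∂μ := (lintegral_const _).symm
    _ ≤ ∫⁻ ω, ∑ i, (A i).indicator 1 ω ∂μ := lintegral_mono fun ω => by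
        simp only [Set.indicator_apply, Pi.one_apply, sum_boole]
        exact_mod_cast hk ω
    _ = ∑ i, μ (A i) := by
        rw [lintegral_finsetSum _ fun i _ => measurable_one.indicator (hA i)]
        simp_rw [lintegral_indicator_one (hA _)]

theorem ENNReal.ofReal_le_of_ceil_mul_le {β : ℝ} {m : ℕ} (hm : m ≠ 0) {p : ℝ≥0∞}
    (h : (⌈β * m⌉₊ : ℝ≥0∞) ≤ m * p) : ENNReal.ofReal β ≤ p := by
  have hβm : ENNReal.ofReal β * m ≤ m * p :=
    calc ENNReal.ofReal β * m = ENNReal.ofReal (β * m) := by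
          rw [ENNReal.ofReal_mul' m.cast_nonneg, ENNReal.ofReal_natCast]
      _ ≤ ⌈β * m⌉₊ := by
          rw [← ENNReal.ofReal_natCast]; exact ENNReal.ofReal_le_ofReal (Nat.le_ceil _)
      _ ≤ m * p := h
  rw [mul_comm] at hβm
  exact (ENNReal.mul_le_mul_iff_right (by simpa using hm) (natCast_ne_top m)).1 hβm

theorem stmt_0 {Ω : Type*} [MeasurableSpace Ω] (P : Measure Ω) [IsProbabilityMeasure P]
    (n : ℕ) (U : Ω → Fin (n + 1) → ℝ) (hU : Measurable U)
    (hexch : ∀ σ : Equiv.Perm (Fin (n + 1)),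
      Measure.map (fun ω => U ω ∘ σ) P = Measure.map U P)
    (β : ℝ) (hβ : β ∈ Set.Ioo (0 : ℝ) 1) :
    ENNReal.ofReal β ≤
      P {ω | U ω (Fin.last n) ≤ orderStat (U ω) ⌈β * (n + 1)⌉₊} := by
  obtain ⟨i, hi⟩ : ∃ i : Fin (n + 1), ⌈β * (n + 1)⌉₊ = i + 1 := by
    have hpos : 0 < ⌈β * (n + 1)⌉₊ := Nat.ceil_pos.2 (by nlinarith [hβ.1])
    have hle : ⌈β * (n + 1)⌉₊ ≤ n + 1 := Nat.ceil_le.2 (by push_cast; nlinarith [hβ.2])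
    exact ⟨⟨⌈β * (n + 1)⌉₊ - 1, by omega⟩, by simp only; omega⟩
  set E : Fin (n + 1) → Set (Fin (n + 1) → ℝ) := fun l => {u | u l ≤ orderStat u (i + 1)}
  have hE : ∀ l, MeasurableSet (E l) := measurableSet_apply_le_orderStat i
  have hswap : ∀ l, P (U ⁻¹' E l) = P (U ⁻¹' E (Fin.last n)) := fun l => by
    rw [← Exchangeable.measure_preimage_comp_perm hexch hU (Equiv.swap l (Fin.last n)) (hE _)]
    congr 1
    ext ω
    simp [E, orderStat_comp_perm]
  have hsum := P.mul_measure_univ_le_sum (fun l => hU (hE l))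
    fun ω => by convert le_card_filter_le_orderStat (U ω) i using 3; rfl
  rw [Finset.sum_congr rfl fun l _ => hswap l, sum_const, card_univ, Fintype.card_fin,
    nsmul_eq_mul, measure_univ, mul_one] at hsum
  exact ENNReal.ofReal_le_of_ceil_mul_le (m := n + 1) n.succ_ne_zero (by simpa [hi, E] using hsum)
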